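/- Let n ≥ 2, t_1, ..., t_n pairwise distinct reals, and E_0, ..., E_n ⊂ ℝ measurable sets with 0 < |E_j| < ∞. For r ∈ (0, min_{j≥1}|E_j|), let Ẽ_j = E_j(r/2, r/2) be the symmetric truncation for j ≥ 1 and Ẽ_0 = E_0. Suppose that for each x ∈ E_0 the sets E_j − t_j x := {y : y + t_j x ∈ E_j} satisfy ⋂_{j=1}^n (Ẽ_j − t_j x) ≠ ∅. Then I(E_0, E_1, ..., E_n) ≤ r|E_0| + I(E_0, Ẽ_1, ..., Ẽ_n), where I(F_0, ..., F_n) = ∫_ℝ 1_{F_0}(x) ∫_ℝ ∏_{j=1}^n 1_{F_j}(y + t_j x) dy dx. -/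

import Mathlib

open MeasureTheory Set
open scoped ENNReal

/-!
For fixed `x`, a point `y` of the fibre `⋂ⱼ (E_j - t_j x)` that misses the truncated fibre
lies left of the largest shifted left endpoint `a_j - t_j x` or right of the smallest shifted
right endpoint `b_j - t_j x`; so the difference is covered by one left tail and one right tail,
each of measure `r/2`. Integrating this over `x ∈ E₀` (Tonelli) gives the inequality.
-/

theorem measure_iInter_le_add_add_measure_iInter_inter_Icc {α ι : Type*} [LinearOrder α]
    [MeasurableSpace α] [Finite ι] (μ : Measure α) (F : ι → Set α) (a b : ι → α) {l u : ℝ≥0∞}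
    (hl : ∀ j, μ (F j ∩ Iio (a j)) ≤ l) (hu : ∀ j, μ (F j ∩ Ioi (b j)) ≤ u) :
    μ (⋂ j, F j) ≤ l + u + μ (⋂ j, F j ∩ Icc (a j) (b j)) := by
  cases isEmpty_or_nonempty ι
  · simp
  obtain ⟨j₀, hj₀⟩ := Finite.exists_max a
  obtain ⟨j₁, hj₁⟩ := Finite.exists_min b
  have hcover : ⋂ j, F j ⊆
      (F j₀ ∩ Iio (a j₀)) ∪ (F j₁ ∩ Ioi (b j₁)) ∪ ⋂ j, F j ∩ Icc (a j) (b j) := by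
    intro y hy
    rw [mem_iInter] at hy
    by_cases hmem : ∀ j, y ∈ Icc (a j) (b j)
    · exact Or.inr (mem_iInter.2 fun j => ⟨hy j, hmem j⟩)
    push Not at hmem
    obtain ⟨j, hj⟩ := hmem
    rw [mem_Icc, not_and_or, not_le, not_le] at hj
    rcases hj with hlt | hgt
    · exact Or.inl (Or.inl ⟨hy j₀, hlt.trans_le (hj₀ j)⟩)
    · exact Or.inl (Or.inr ⟨hy j₁, (hj₁ j).trans_lt hgt⟩)
  calc μ (⋂ j, F j) ≤ μ (F j₀ ∩ Iio (a j₀)) + μ (F j₁ ∩ Ioi (b j₁)) +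
        μ (⋂ j, F j ∩ Icc (a j) (b j)) :=
      (measure_mono hcover).trans <|
        (measure_union_le _ _).trans (add_le_add_left (measure_union_le _ _) _)
    _ ≤ l + u + μ (⋂ j, F j ∩ Icc (a j) (b j)) := by gcongr <;> simp only [hl, hu]

theorem Measure.prod_setOf_fst_mem_and {α β : Type*} [MeasurableSpace α] [MeasurableSpace β]
    (μ : Measure α) (ν : Measure β) [SFinite ν] {s : Set α} (hs : MeasurableSet s)
    {P : α → β → Prop} (hP : MeasurableSet {p : α × β | p.1 ∈ s ∧ P p.1 p.2}) :
    μ.prod ν {p : α × β | p.1 ∈ s ∧ P p.1 p.2} = ∫⁻ x in s, ν {y | P x y} ∂μ := by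
  rw [Measure.prod_apply hP, ← lintegral_indicator hs]
  congr 1 with x
  by_cases hx : x ∈ s <;> simp [hx, preimage]

theorem volume_setOf_forall_add_mem_le {ι : Type*} [Finite ι] (c : ι → ℝ) (E : ι → Set ℝ)
    (a b : ι → ℝ) {l u : ℝ≥0∞} (hl : ∀ j, volume (E j ∩ Iic (a j)) ≤ l)
    (hu : ∀ j, volume (E j ∩ Ici (b j)) ≤ u) :
    volume {y : ℝ | ∀ j, y + c j ∈ E j} ≤
      l + u + volume {y : ℝ | ∀ j, y + c j ∈ E j ∩ Icc (a j) (b j)} := by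
  have key := measure_iInter_le_add_add_measure_iInter_inter_Icc volume
    (fun j => (· + c j) ⁻¹' E j) (fun j => a j - c j) (fun j => b j - c j) (l := l) (u := u)
    (fun j => ?_) (fun j => ?_)
  · convert key using 3 <;> ext y <;> simp [le_sub_iff_add_le]
  · calc volume ((· + c j) ⁻¹' E j ∩ Iio (a j - c j))
        = volume ((· + c j) ⁻¹' (E j ∩ Iio (a j))) := by
          congr 1; ext y; simp [lt_sub_iff_add_lt]
      _ ≤ l := by
          rw [measure_preimage_add_right]
          exact (measure_mono (inter_subset_inter_right _ Iio_subset_Iic_self)).trans (hl j)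
  · calc volume ((· + c j) ⁻¹' E j ∩ Ioi (b j - c j))
        = volume ((· + c j) ⁻¹' (E j ∩ Ioi (b j))) := by
          congr 1; ext y; simp [sub_lt_iff_lt_add]
      _ ≤ u := by
          rw [measure_preimage_add_right]
          exact (measure_mono (inter_subset_inter_right _ Ioi_subset_Ici_self)).trans (hu j)

theorem measurableSet_setOf_fst_mem_and_forall_add_mul_mem {ι : Type*} [Countable ι]
    {s : Set ℝ} (hs : MeasurableSet s) (t : ι → ℝ) {F : ι → Set ℝ}
    (hF : ∀ j, MeasurableSet (F j)) :
    MeasurableSet {p : ℝ × ℝ | p.1 ∈ s ∧ ∀ j, p.2 + t j * p.1 ∈ F j} := by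
  have hinter : {p : ℝ × ℝ | p.1 ∈ s ∧ ∀ j, p.2 + t j * p.1 ∈ F j} =
      Prod.fst ⁻¹' s ∩ ⋂ j, (fun p : ℝ × ℝ => p.2 + t j * p.1) ⁻¹' F j := by
    ext p; simp
  rw [hinter]
  exact (measurable_fst hs).inter <|
    .iInter fun j => (measurable_snd.add (measurable_fst.const_mul (t j))) (hF j)

theorem stmt18_general (n : ℕ) (t : Fin n → ℝ)
    (E0 : Set ℝ) (E : Fin n → Set ℝ)
    (hmeas0 : MeasurableSet E0)
    (hmeas : ∀ j, MeasurableSet (E j))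
    (r : ℝ) (hr : 0 < r)
    (a b : Fin n → ℝ)
    (ha : ∀ j, IsLeast {s : ℝ | volume (E j ∩ Iic s) = ENNReal.ofReal (r / 2)} (a j))
    (hb : ∀ j, IsGreatest {s : ℝ | volume (E j ∩ Ici s) = ENNReal.ofReal (r / 2)} (b j)) :
    volume {p : ℝ × ℝ | p.1 ∈ E0 ∧ ∀ j, p.2 + t j * p.1 ∈ E j} ≤
      ENNReal.ofReal r * volume E0 +
        volume {p : ℝ × ℝ | p.1 ∈ E0 ∧ ∀ j, p.2 + t j * p.1 ∈ E j ∩ Icc (a j) (b j)} := by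
  have hr' : ENNReal.ofReal (r / 2) + ENNReal.ofReal (r / 2) = ENNReal.ofReal r := by
    rw [← ENNReal.ofReal_add (by positivity) (by positivity), add_halves]
  rw [Measure.volume_eq_prod,
    Measure.prod_setOf_fst_mem_and _ _ hmeas0 (P := fun x y => ∀ j, y + t j * x ∈ E j)
      (measurableSet_setOf_fst_mem_and_forall_add_mul_mem hmeas0 t hmeas),
    Measure.prod_setOf_fst_mem_and _ _ hmeas0
      (P := fun x y => ∀ j, y + t j * x ∈ E j ∩ Icc (a j) (b j))
      (measurableSet_setOf_fst_mem_and_forall_add_mul_mem hmeas0 t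
        fun j => (hmeas j).inter measurableSet_Icc),
    ← setLIntegral_const, ← lintegral_add_left measurable_const]
  refine setLIntegral_mono' hmeas0 fun x _ => ?_
  rw [← hr']
  exact volume_setOf_forall_add_mem_le (fun j => t j * x) E a b
    (fun j => (ha j).1.le) (fun j => (hb j).1.le)

/-- Truncation inequality integrated in `x`: with `Ẽ_j = E_j(r/2, r/2)` the symmetric
truncations, if for each `x ∈ E₀` the truncated fiber sets have a common point, then
`I(E₀, E₁, …, Eₙ) ≤ r |E₀| + I(E₀, Ẽ₁, …, Ẽₙ)`. -/
theorem stmt18 (n : ℕ) (hn : 2 ≤ n) (t : Fin n → ℝ) (ht : Function.Injective t)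
    (E0 : Set ℝ) (E : Fin n → Set ℝ)
    (hmeas0 : MeasurableSet E0) (hpos0 : 0 < volume E0) (hfin0 : volume E0 < ⊤)
    (hmeas : ∀ j, MeasurableSet (E j)) (hpos : ∀ j, 0 < volume (E j))
    (hfin : ∀ j, volume (E j) < ⊤)
    (r : ℝ) (hr : 0 < r) (hrlt : ∀ j, r < (volume (E j)).toReal)
    (a b : Fin n → ℝ)
    (ha : ∀ j, IsLeast {s : ℝ | volume (E j ∩ Iic s) = ENNReal.ofReal (r / 2)} (a j))
    (hb : ∀ j, IsGreatest {s : ℝ | volume (E j ∩ Ici s) = ENNReal.ofReal (r / 2)} (b j))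
    (hne : ∀ x ∈ E0, (⋂ j, {y : ℝ | y + t j * x ∈ E j ∩ Icc (a j) (b j)}).Nonempty) :
    volume {p : ℝ × ℝ | p.1 ∈ E0 ∧ ∀ j, p.2 + t j * p.1 ∈ E j} ≤
      ENNReal.ofReal r * volume E0 +
        volume {p : ℝ × ℝ | p.1 ∈ E0 ∧ ∀ j, p.2 + t j * p.1 ∈ E j ∩ Icc (a j) (b j)} :=
  stmt18_general n t E0 E hmeas0 hmeas r hr a b ha hb
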